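/- Let F : (ℂ^p,0) → (ℂ^m,0) be a formal mapping, X_1,…,X_k formal vector fields on ℂ^p, and Y_1,…,Y_k formal vector fields on ℂ^m. Suppose there are nonzero c_1,…,c_k ∈ ℂ[[x]] such that X_j(f∘F) = c_j·((Y_j f)∘F) for all f ∈ ℂ[[y]] and j = 1,…,k, and suppose that the vector space obtained by evaluating at 0 the elements of the Lie algebra generated by Y_1,…,Y_k has dimension m. Then Rk F = m. -/

import Mathlib

noncomputable section

namespace Segre

open MvPowerSeries

/-- Formal power series with complex coefficients. -/
abbrev PS (σ : Type*) := MvPowerSeries σ ℂ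

/-- Build a power series from its coefficient function. -/
def ofFun {σ : Type*} (g : (σ →₀ ℕ) → ℂ) : PS σ := g

/-- Coefficientwise complex conjugation of a formal power series. -/
def conjPS {σ : Type*} (f : PS σ) : PS σ := MvPowerSeries.map (σ := σ) (starRingEnd ℂ) f

/-- Formal partial derivative of a formal power series. -/
def pd {σ : Type*} [DecidableEq σ] (j : σ) (f : PS σ) : PS σ :=
  ofFun fun m => ((m j : ℂ) + 1) * MvPowerSeries.coeff (R := ℂ) (m + Finsupp.single j 1) f

/-- Reindexing of variables along an equivalence. -/
def reindexPS {σ τ : Type*} (e : σ ≃ τ) (f : PS σ) : PS τ :=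
  ofFun fun m => MvPowerSeries.coeff (R := ℂ) (Finsupp.equivMapDomain e.symm m) f

/-- Formal composition (substitution) `f ∘ F` of a formal power series
`f` in the variables `τ` with a family `F` of power series without constant
term.  (For families with nonvanishing constant term the value is junk.) -/
def cmp {τ σ : Type*} [Fintype τ] [DecidableEq τ] (f : PS τ) (F : τ → PS σ) : PS σ :=
  ofFun fun m => MvPowerSeries.coeff (R := ℂ) m
    (∑ α ∈ Finset.Iic (Finsupp.equivFunOnFinite.symm fun _ => m.sum fun _ k => k),
      MvPowerSeries.coeff (R := ℂ) α f • ∏ i, F i ^ α i)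

/-- Renaming of variables along an (injective) map. -/
def injPS {σ τ : Type*} [Fintype σ] [DecidableEq σ] (ι : σ → τ) (f : PS σ) : PS τ :=
  cmp f fun s => MvPowerSeries.X (ι s)

/-- The "generic rank" of a matrix over a commutative ring: the largest size of a
nonvanishing minor. -/
def matGenRank {α β R : Type*} [Fintype α] [Fintype β] [CommRing R] (M : Matrix α β R) : ℕ :=
  sSup {s | ∃ (r : Fin s ↪ α) (c : Fin s ↪ β), (M.submatrix r c).det ≠ 0}

/-- The Jacobian matrix of a formal mapping. -/
def jac {σ ι : Type*} [DecidableEq σ] (F : ι → PS σ) : Matrix ι σ (PS σ) :=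
  Matrix.of fun i j => pd j (F i)

/-- The rank `Rk F` of a formal mapping: the largest size of a nonvanishing minor of the
Jacobian matrix, i.e. the rank of the Jacobian matrix over the fraction field. -/
def rk {σ ι : Type*} [Fintype σ] [DecidableEq σ] [Fintype ι] (F : ι → PS σ) : ℕ :=
  matGenRank (jac F)

/-- The rank at `0` of the Jacobian matrix of a formal mapping. -/
def rk0 {σ ι : Type*} [Fintype σ] [DecidableEq σ] [Fintype ι] (F : ι → PS σ) : ℕ :=
  Matrix.rank ((jac F).map (MvPowerSeries.constantCoeff (σ := σ) (R := ℂ)))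

/-- A formal mapping: each component has vanishing constant term. -/
def IsFormalMap {σ ι : Type*} (F : ι → PS σ) : Prop :=
  ∀ i, MvPowerSeries.constantCoeff (σ := σ) (R := ℂ) (F i) = 0

/-- The differential at `0` of a formal power series. -/
def diff0 {σ : Type*} [DecidableEq σ] (f : PS σ) : σ → ℂ :=
  fun j => MvPowerSeries.constantCoeff (σ := σ) (R := ℂ) (pd j f)

/-- `I` is the manifold ideal with generators `f`: the generators have no constant
term, generate `I`, and have linearly independent differentials at `0`. -/
def IsMfldIdealWith {σ ι : Type*} [Fintype σ] [DecidableEq σ]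
    (I : Ideal (PS σ)) (f : ι → PS σ) : Prop :=
  (∀ i, MvPowerSeries.constantCoeff (σ := σ) (R := ℂ) (f i) = 0) ∧
  I = Ideal.span (Set.range f) ∧
  LinearIndependent ℂ fun i => diff0 (f i)

/-- `I` is a manifold ideal of codimension `d`. -/
def IsMfldIdeal {σ : Type*} [Fintype σ] [DecidableEq σ] (I : Ideal (PS σ)) (d : ℕ) : Prop :=
  ∃ f : Fin d → PS σ, IsMfldIdealWith I f

/-- A formal vector field, given by its coefficients. -/
abbrev VF (σ : Type*) := σ → PS σ

/-- The action of a formal vector field (as a derivation) on a power series. -/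
def vfApply {σ : Type*} [Fintype σ] [DecidableEq σ] (X : VF σ) (f : PS σ) : PS σ :=
  ∑ j, X j * pd j f

/-- The Lie bracket (commutator) of two formal vector fields. -/
def vfBracket {σ : Type*} [Fintype σ] [DecidableEq σ] (X Y : VF σ) : VF σ :=
  fun j => vfApply X (Y j) - vfApply Y (X j)

/-- Evaluation of a formal vector field at the origin. -/
def vfEval0 {σ : Type*} (X : VF σ) : σ → ℂ :=
  fun j => MvPowerSeries.constantCoeff (σ := σ) (R := ℂ) (X j)

/-- A formal vector field is tangent to (the formal manifold defined by) an ideal if it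
maps the ideal into itself. -/
def Tangent {σ : Type*} [Fintype σ] [DecidableEq σ] (X : VF σ) (I : Ideal (PS σ)) : Prop :=
  ∀ f ∈ I, vfApply X f ∈ I

/-- The Lie algebra (of formal vector fields) generated by a set `S`. -/
inductive lieGen {σ : Type*} [Fintype σ] [DecidableEq σ] (S : Set (VF σ)) : VF σ → Prop
  | base {X} : X ∈ S → lieGen S X
  | add {X Y} : lieGen S X → lieGen S Y → lieGen S (X + Y)
  | smul (c : ℂ) {X} : lieGen S X → lieGen S (fun j => (MvPowerSeries.C (σ := σ) (R := ℂ) c) * X j)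
  | bracket {X Y} : lieGen S X → lieGen S Y → lieGen S (vfBracket X Y)

/-- A set of formal vector fields which is a Lie algebra and a `ℂ[[x]]`-module. -/
structure IsLieMod {σ : Type*} [Fintype σ] [DecidableEq σ] (g : Set (VF σ)) : Prop where
  add_mem : ∀ {X Y : VF σ}, X ∈ g → Y ∈ g → X + Y ∈ g
  smul_mem : ∀ (a : PS σ) {X : VF σ}, X ∈ g → (fun j => a * X j) ∈ g
  bracket_mem : ∀ {X Y : VF σ}, X ∈ g → Y ∈ g → vfBracket X Y ∈ g

/-- The involution `σ(f)(Z,ζ) = conj f(ζ,Z)` on power series in `(Z,ζ)`. -/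
def realOp {σZ : Type*} (f : PS (σZ ⊕ σZ)) : PS (σZ ⊕ σZ) :=
  conjPS (reindexPS (Equiv.sumComm σZ σZ) f)

/-- The matrix `∂ρ/∂Z` of the derivatives of `ρ` in the first (holomorphic) block of
variables. -/
def zJac {σZ ι : Type*} [DecidableEq σZ] (ρ : ι → PS (σZ ⊕ σZ)) : Matrix ι σZ (PS (σZ ⊕ σZ)) :=
  Matrix.of fun l j => pd (Sum.inl j) (ρ l)

/-- `I` is the ideal of a formal generic manifold of codimension `d`, with given
generators `ρ`: `I` is a real manifold ideal and `∂ρ/∂Z(0)` has rank `d`. -/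
def IsGenericMfld {σZ : Type*} [Fintype σZ] [DecidableEq σZ] {d : ℕ}
    (I : Ideal (PS (σZ ⊕ σZ))) (ρ : Fin d → PS (σZ ⊕ σZ)) : Prop :=
  IsMfldIdealWith I ρ ∧ (∀ f ∈ I, realOp f ∈ I) ∧
  Matrix.rank ((zJac ρ).map (MvPowerSeries.constantCoeff (R := ℂ))) = d

/-- The set of formal `(1,0)` and `(0,1)` vector fields tangent to (the manifold defined
by) `I`. -/
def holFields {σZ : Type*} [Fintype σZ] [DecidableEq σZ] (I : Ideal (PS (σZ ⊕ σZ))) :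
    Set (VF (σZ ⊕ σZ)) :=
  {X | ((∀ j, X (Sum.inr j) = 0) ∨ (∀ j, X (Sum.inl j) = 0)) ∧ Tangent X I}

/-- `dim_ℂ g_M(0)`, where `g_M` is the Lie algebra generated by the formal `(1,0)` and
`(0,1)` vector fields tangent to `M`. -/
def gMDim {σZ : Type*} [Fintype σZ] [DecidableEq σZ] (I : Ideal (PS (σZ ⊕ σZ))) : ℕ :=
  Module.finrank ℂ (Submodule.span ℂ (vfEval0 '' {X | lieGen (holFields I) X}))

/-- `γ(ζ,t)` is a Segre variety mapping for the (formal generic manifold with) defining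
series `ρ`:  `γ` has no constant term, `ρ(γ(ζ,t),ζ) = 0`, and `∂γ/∂t(0)` has rank `n`. -/
def IsSegreMap {n d : ℕ} (ρ : Fin d → PS (Fin (n + d) ⊕ Fin (n + d)))
    (γ : Fin (n + d) → PS (Fin (n + d) ⊕ Fin n)) : Prop :=
  IsFormalMap γ ∧
  (∀ l, cmp (ρ l) (Sum.elim γ fun j => MvPowerSeries.X (Sum.inl j)) = 0) ∧
  Matrix.rank
    (Matrix.of fun (i : Fin (n + d)) (j : Fin n) =>
      MvPowerSeries.constantCoeff (R := ℂ) (pd (Sum.inr j) (γ i))) = n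

/-- The iterated Segre mappings: `iterSegre γ j` is `v^{j+1}`, a formal mapping from
`ℂ^{(j+1)n}` (with variables indexed by `Fin (j+1) × Fin n`) to `ℂ^N`. -/
def iterSegre {n d : ℕ} (γ : Fin (n + d) → PS (Fin (n + d) ⊕ Fin n)) :
    (j : ℕ) → Fin (n + d) → PS (Fin (j + 1) × Fin n)
  | 0 => fun c =>
      cmp (γ c) (Sum.elim (fun _ => 0) fun i => MvPowerSeries.X ((0 : Fin 1), i))
  | m + 1 => fun c =>
      cmp (γ c)
        (Sum.elim
          (fun z => conjPS (injPS (fun p : Fin (m + 1) × Fin n => (p.1.castSucc, p.2))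
            (iterSegre γ m z)))
          (fun i => MvPowerSeries.X (Fin.last (m + 1), i)))

/-! The fields on the target that are `F`-related to some field on the source up to a nonzero
factor (`W (f ∘ F) = a · (Z f) ∘ F`) are closed under sums, constant multiples and brackets,
so the whole Lie algebra generated by the `Y_j` consists of such fields. Pick `Z_1, …, Z_m` in
it whose values at `0` form a basis of `ℂ^m`, with related fields `W_j` and factors `a_j`.
Applying `W_j` to the components of `F` gives `Jac F · (W_j) = (Z_j ∘ F) · diag (a_j)`. The
matrix `(Z_j ∘ F)` has invertible constant term, so this product has nonzero determinant and
`Jac F` has rank `m` over the fraction field, i.e. some `m × m` minor of it does not vanish. -/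

end Segre

theorem MvPowerSeries.pderiv_comm {σ R : Type*} [CommSemiring R] (i j : σ)
    (f : MvPowerSeries σ R) :
    pderiv R i (pderiv R j f) = pderiv R j (pderiv R i f) := by
  ext n
  simp only [coeff_pderiv]
  rcases eq_or_ne i j with rfl | hij
  · rfl
  · rw [add_right_comm n (Finsupp.single i 1)]
    simp only [Finsupp.coe_add, Pi.add_apply, Finsupp.single_eq_of_ne hij,
      Finsupp.single_eq_of_ne hij.symm, add_zero]
    ring

theorem exists_linearIndependent_fin_of_span_eq_top {K V : Type*} [DivisionRing K]
    [AddCommGroup V] [Module K V] [FiniteDimensional K V] {S : Set V}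
    (hS : Submodule.span K S = ⊤) {n : ℕ} (hn : Module.finrank K V = n) :
    ∃ v : Fin n → V, (∀ i, v i ∈ S) ∧ LinearIndependent K v := by
  obtain ⟨b, hbS, hspan, hind⟩ := exists_linearIndependent K S
  have : Fintype b := hind.setFinite.fintype
  have hcard : Fintype.card b = n := by
    rw [← hn, Module.finrank_eq_card_basis
      (Module.Basis.mk hind (by rw [Subtype.range_coe, hspan, hS]))]
  let e := (Fintype.equivFinOfCardEq hcard).symm
  exact ⟨fun i => e i, fun i => hbS (e i).2, hind.comp e e.injective⟩

namespace Matrix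

variable {n R K : Type*} [Fintype n] [DecidableEq n] [CommRing R] [Field K]

theorem det_ne_zero_of_linearIndependent_col_map (φ : R →+* K) {M : Matrix n n R}
    (h : LinearIndependent K (M.map φ).col) : M.det ≠ 0 := by
  have hdet : φ M.det ≠ 0 := by
    rw [RingHom.map_det]
    exact ((isUnit_iff_isUnit_det _).mp (linearIndependent_cols_iff_isUnit.mp h)).ne_zero
  exact fun h0 => hdet (by rw [h0, map_zero])

theorem exists_det_submatrix_ne_zero_of_det_mul_ne_zero [IsDomain R] {m : ℕ} {ι : Type*}
    [Fintype ι] {A : Matrix (Fin m) ι R} {B : Matrix ι (Fin m) R} (h : (A * B).det ≠ 0) :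
    ∃ c : Fin m ↪ ι, (A.submatrix id c).det ≠ 0 := by
  let φ : R →+* FractionRing R := algebraMap _ _
  have hAB : ((A.map φ) * (B.map φ)).det ≠ 0 := by
    rw [← Matrix.map_mul, ← RingHom.mapMatrix_apply, ← RingHom.map_det]
    exact (map_ne_zero_iff φ (IsFractionRing.injective R _)).mpr h
  have hspan : Submodule.span (FractionRing R) (Set.range (A.map φ).col) = ⊤ := by
    apply Submodule.eq_top_of_finrank_eq
    refine le_antisymm (Submodule.finrank_le _) ?_
    calc Module.finrank (FractionRing R) (Fin m → FractionRing R) = m := by simp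
      _ = ((A.map φ) * (B.map φ)).rank := by rw [rank_of_det_ne_zero hAB, Fintype.card_fin]
      _ ≤ (A.map φ).rank := rank_mul_le_left _ _
      _ = _ := rank_eq_finrank_span_cols _
  obtain ⟨u, hu, hind⟩ := exists_linearIndependent_fin_of_span_eq_top hspan (n := m) (by simp)
  choose c hc using hu
  refine ⟨⟨c, fun i j hij => hind.injective (by rw [← hc i, ← hc j, hij])⟩, ?_⟩
  have hcol : ((A.submatrix id c).map φ).col = u := by
    ext j i
    rw [← hc j]
    rfl
  exact det_ne_zero_of_linearIndependent_col_map φ (hcol ▸ hind)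

end Matrix

namespace Segre

open MvPowerSeries

theorem pd_eq_pderiv {σ : Type*} [DecidableEq σ] (j : σ) (f : PS σ) :
    pd j f = pderiv ℂ j f := by
  ext n
  exact (coeff_pderiv f n).symm ▸ mul_comm _ _

section VectorField

variable {σ : Type*} [Fintype σ] [DecidableEq σ]

theorem vfApply_add_left (Z Z' : VF σ) (f : PS σ) :
    vfApply (Z + Z') f = vfApply Z f + vfApply Z' f := by
  simp only [vfApply, Pi.add_apply, add_mul, Finset.sum_add_distrib]

theorem vfApply_sub_left (Z Z' : VF σ) (f : PS σ) :
    vfApply (Z - Z') f = vfApply Z f - vfApply Z' f := by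
  simp only [vfApply, Pi.sub_apply, sub_mul, Finset.sum_sub_distrib]

theorem vfApply_smul_left (a : PS σ) (Z : VF σ) (f : PS σ) :
    vfApply (a • Z) f = a * vfApply Z f := by
  simp only [vfApply, Pi.smul_apply, smul_eq_mul, mul_assoc, Finset.mul_sum]

theorem vfApply_mul (Z : VF σ) (f g : PS σ) :
    vfApply Z (f * g) = vfApply Z f * g + f * vfApply Z g := by
  simp only [vfApply, pd_eq_pderiv, Derivation.leibniz, smul_eq_mul, mul_add,
    Finset.sum_add_distrib, Finset.sum_mul, Finset.mul_sum]
  rw [add_comm]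
  congr 1 <;> exact Finset.sum_congr rfl fun _ _ => by ring

theorem vfApply_sum {ι : Type*} (Z : VF σ) (s : Finset ι) (f : ι → PS σ) :
    vfApply Z (∑ i ∈ s, f i) = ∑ i ∈ s, vfApply Z (f i) := by
  simp only [vfApply, pd_eq_pderiv, map_sum, Finset.mul_sum]
  exact Finset.sum_comm

theorem vfApply_X (Z : VF σ) (i : σ) : vfApply Z (X i) = Z i := by
  simp [vfApply, pd_eq_pderiv, pderiv_X, Pi.single_apply]

theorem vfApply_vfApply (Z Z' : VF σ) (f : PS σ) :
    vfApply Z (vfApply Z' f) =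
      ∑ l, vfApply Z (Z' l) * pd l f + ∑ l, ∑ j, Z' l * Z j * pd j (pd l f) := by
  rw [show vfApply Z' f = ∑ l, Z' l * pd l f from rfl, vfApply_sum, ← Finset.sum_add_distrib]
  refine Finset.sum_congr rfl fun l _ => ?_
  rw [vfApply_mul]
  congr 1
  simp only [vfApply, Finset.mul_sum, mul_assoc]

theorem vfApply_vfBracket (Z Z' : VF σ) (f : PS σ) :
    vfApply (vfBracket Z Z') f = vfApply Z (vfApply Z' f) - vfApply Z' (vfApply Z f) := by
  have hsymm : ∑ l, ∑ j, Z' l * Z j * pd j (pd l f) = ∑ l, ∑ j, Z l * Z' j * pd j (pd l f) := by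
    rw [Finset.sum_comm]
    simp only [pd_eq_pderiv, pderiv_comm _ _ f, mul_comm (Z' _)]
  rw [vfApply_vfApply, vfApply_vfApply, hsymm, add_sub_add_right_eq_sub, ← Finset.sum_sub_distrib]
  simp only [vfApply, vfBracket, sub_mul]

end VectorField

section Composition

variable {σ τ : Type*} [Fintype τ] [DecidableEq τ]

theorem coeff_cmp (f : PS τ) (F : τ → PS σ) (n : σ →₀ ℕ) :
    coeff n (cmp f F) =
      ∑ α ∈ Finset.Iic (Finsupp.equivFunOnFinite.symm fun _ => n.sum fun _ k => k),
        coeff α f * coeff n (∏ i, F i ^ α i) := by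
  rw [show coeff n (cmp f F) = coeff n (∑ α ∈ Finset.Iic (Finsupp.equivFunOnFinite.symm
    fun _ => n.sum fun _ k => k), coeff α f • ∏ i, F i ^ α i) from rfl, map_sum]
  simp only [coeff_smul]

theorem cmp_add (f g : PS τ) (F : τ → PS σ) : cmp (f + g) F = cmp f F + cmp g F := by
  ext n
  simp only [coeff_cmp, map_add, add_mul, Finset.sum_add_distrib]

theorem cmp_smul (c : ℂ) (f : PS τ) (F : τ → PS σ) : cmp (c • f) F = c • cmp f F := by
  ext n
  simp only [coeff_cmp, coeff_smul, mul_assoc, Finset.mul_sum]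

theorem cmp_sub (f g : PS τ) (F : τ → PS σ) : cmp (f - g) F = cmp f F - cmp g F := by
  rw [eq_sub_iff_add_eq, ← cmp_add, sub_add_cancel]

theorem constantCoeff_cmp (f : PS τ) (F : τ → PS σ) :
    constantCoeff (cmp f F) = constantCoeff f := by
  have hbound :
      (Finsupp.equivFunOnFinite.symm fun _ : τ => (0 : σ →₀ ℕ).sum fun _ k => k) = ⊥ := by
    ext; simp [bot_eq_zero]
  rw [← coeff_zero_eq_constantCoeff_apply, coeff_cmp, hbound, Finset.Iic_bot,
    Finset.sum_singleton]
  simp [bot_eq_zero]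

theorem cmp_X (i : τ) {F : τ → PS σ} (hF : IsFormalMap F) : cmp (X i) F = F i := by
  ext n
  rw [coeff_cmp]
  simp only [coeff_X, ite_mul, one_mul, zero_mul, Finset.sum_ite_eq', Finset.mem_Iic,
    Finsupp.single_le_iff]
  split_ifs with hn
  · simp [Finsupp.single_apply, pow_ite]
  · have hn0 : n = 0 := by
      ext j
      simp only [Finsupp.coe_equivFunOnFinite_symm, not_le, Nat.lt_one_iff, Finsupp.sum,
        Finset.sum_eq_zero_iff, Finsupp.mem_support_iff] at hn
      by_contra h
      exact h (hn j h)
    rw [hn0, coeff_zero_eq_constantCoeff_apply, hF i]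

end Composition

instance {σ : Type*} : IsDomain (PS σ) := NoZeroDivisors.to_isDomain _

theorem jac_mul_eq_vfApply {σ τ ι : Type*} [Fintype σ] [DecidableEq σ] (F : τ → PS σ)
    (W : ι → VF σ) :
    jac F * Matrix.of (fun l j => W j l) = Matrix.of fun i j => vfApply (W j) (F i) := by
  ext i j
  simp only [jac, Matrix.mul_apply, Matrix.of_apply, vfApply, mul_comm]

section Related

variable {σ τ : Type*} [Fintype σ] [DecidableEq σ] [Fintype τ] [DecidableEq τ]

def RelatedUpTo (F : τ → PS σ) (a : PS σ) (W : VF σ) (Z : VF τ) : Prop :=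
  ∀ f, vfApply W (cmp f F) = a * cmp (vfApply Z f) F

variable {F : τ → PS σ} {a b : PS σ} {W W' : VF σ} {Z Z' : VF τ}

theorem RelatedUpTo.add (h : RelatedUpTo F a W Z) (h' : RelatedUpTo F b W' Z') :
    RelatedUpTo F (a * b) (b • W + a • W') (Z + Z') := by
  intro f
  rw [vfApply_add_left, vfApply_smul_left, vfApply_smul_left, h, h', vfApply_add_left, cmp_add]
  ring

theorem RelatedUpTo.const_smul (h : RelatedUpTo F a W Z) (c : ℂ) :
    RelatedUpTo F a ((C c : PS σ) • W) (fun j => C c * Z j) := by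
  intro f
  have hZ : vfApply (fun j => C c * Z j) f = c • vfApply Z f :=
    (vfApply_smul_left _ Z f).trans (smul_eq_C_mul _ c).symm
  rw [vfApply_smul_left, h, hZ, cmp_smul, smul_eq_C_mul]
  ring

theorem RelatedUpTo.bracket (h : RelatedUpTo F a W Z) (h' : RelatedUpTo F b W' Z') :
    RelatedUpTo F (a * b * (a * b))
      ((a * b) • vfBracket W W' + (b * vfApply W' a) • W - (a * vfApply W b) • W')
      (vfBracket Z Z') := by
  -- `[W, W'] (f ∘ F) = ab · ([Z, Z'] f) ∘ F + W b · (Z' f) ∘ F - W' a · (Z f) ∘ F`, and after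
  -- multiplying by `ab` the last two terms are `a W b · W' (f ∘ F)` and `b W' a · W (f ∘ F)`.
  intro f
  have hWW' : vfApply W (vfApply W' (cmp f F)) =
      vfApply W b * cmp (vfApply Z' f) F + b * (a * cmp (vfApply Z (vfApply Z' f)) F) := by
    rw [h', vfApply_mul, h]
  have hW'W : vfApply W' (vfApply W (cmp f F)) =
      vfApply W' a * cmp (vfApply Z f) F + a * (b * cmp (vfApply Z' (vfApply Z f)) F) := by
    rw [h, vfApply_mul, h']
  rw [vfApply_sub_left, vfApply_add_left, vfApply_smul_left, vfApply_smul_left,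
    vfApply_smul_left, vfApply_vfBracket, hWW', hW'W, h, h', vfApply_vfBracket, cmp_sub]
  ring

theorem exists_relatedUpTo_of_lieGen {S : Set (VF τ)}
    (hS : ∀ Z ∈ S, ∃ a ≠ 0, ∃ W, RelatedUpTo F a W Z) (hZ : lieGen S Z) :
    ∃ a ≠ 0, ∃ W, RelatedUpTo F a W Z := by
  induction hZ with
  | base hZ => exact hS _ hZ
  | add _ _ ih ih' =>
    obtain ⟨a, ha, W, h⟩ := ih
    obtain ⟨b, hb, W', h'⟩ := ih'
    exact ⟨_, mul_ne_zero ha hb, _, h.add h'⟩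
  | smul c _ ih =>
    obtain ⟨a, ha, W, h⟩ := ih
    exact ⟨a, ha, _, RelatedUpTo.const_smul h c⟩
  | bracket _ _ ih ih' =>
    obtain ⟨a, ha, W, h⟩ := ih
    obtain ⟨b, hb, W', h'⟩ := ih'
    have hab := mul_ne_zero ha hb
    exact ⟨_, mul_ne_zero hab hab, _, h.bracket h'⟩

theorem RelatedUpTo.vfApply_eq (h : RelatedUpTo F a W Z) (hF : IsFormalMap F) (i : τ) :
    vfApply W (F i) = a * cmp (Z i) F := by
  simpa only [cmp_X i hF, vfApply_X] using h (X i)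

theorem det_jac_mul_ne_zero (hF : IsFormalMap F) {Z : τ → VF τ} {a : τ → PS σ}
    {W : τ → VF σ} (hrel : ∀ j, RelatedUpTo F (a j) (W j) (Z j)) (ha : ∀ j, a j ≠ 0)
    (hZ : LinearIndependent ℂ fun j => vfEval0 (Z j)) :
    (jac F * Matrix.of fun l j => W j l).det ≠ 0 := by
  set M : Matrix τ τ (PS σ) := Matrix.of fun i j => cmp (Z j i) F
  have hfactor : jac F * Matrix.of (fun l j => W j l) = M * Matrix.diagonal a := by
    rw [jac_mul_eq_vfApply]
    ext i j
    simp only [Matrix.of_apply, Matrix.mul_diagonal, (hrel j).vfApply_eq hF, M, mul_comm]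
  have hcol : (M.map constantCoeff).col = fun j => vfEval0 (Z j) := by
    ext j i
    exact constantCoeff_cmp _ F
  rw [hfactor, Matrix.det_mul, Matrix.det_diagonal]
  exact mul_ne_zero (Matrix.det_ne_zero_of_linearIndependent_col_map constantCoeff (hcol ▸ hZ))
    (Finset.prod_ne_zero_iff.mpr fun j _ => ha j)

end Related

theorem matGenRank_eq_of_det_submatrix_ne_zero {β R : Type*} [Fintype β] [CommRing R] {m : ℕ}
    {M : Matrix (Fin m) β R} (c : Fin m ↪ β) (h : (M.submatrix id c).det ≠ 0) :
    matGenRank M = m := by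
  have hmem : m ∈ {s | ∃ (r : Fin s ↪ Fin m) (c : Fin s ↪ β), (M.submatrix r c).det ≠ 0} :=
    ⟨Function.Embedding.refl _, c, h⟩
  have hle : ∀ s ∈ {s | ∃ (r : Fin s ↪ Fin m) (c : Fin s ↪ β), (M.submatrix r c).det ≠ 0},
      s ≤ m := by
    rintro s ⟨r, -, -⟩
    simpa using Fintype.card_le_of_embedding r
  exact le_antisymm (csSup_le ⟨m, hmem⟩ hle) (le_csSup ⟨m, hle⟩ hmem)

/-- If the `Y_j` satisfy `X_j(f∘F) = c_j (Y_j f)∘F` and the Lie algebra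
generated by the `Y_j`, evaluated at `0`, spans `ℂ^m`, then `Rk F = m`. -/
theorem statement_18 {p m k : ℕ} (F : Fin m → PS (Fin p)) (hF0 : IsFormalMap F)
    (X : Fin k → VF (Fin p)) (Y : Fin k → VF (Fin m)) (c : Fin k → PS (Fin p))
    (hc : ∀ j, c j ≠ 0)
    (hid : ∀ j (f : PS (Fin m)), vfApply (X j) (cmp f F) = c j * cmp (vfApply (Y j) f) F)
    (hdim : Module.finrank ℂ
        (Submodule.span ℂ (vfEval0 '' {Z | lieGen (Set.range Y) Z})) = m) :
    rk F = m := by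
  have hspan : Submodule.span ℂ (vfEval0 '' {Z | lieGen (Set.range Y) Z}) = ⊤ :=
    Submodule.eq_top_of_finrank_eq (by simp [hdim])
  obtain ⟨v, hvS, hv⟩ := exists_linearIndependent_fin_of_span_eq_top hspan (n := m) (by simp)
  choose Z hZ hZv using hvS
  have hlift : ∀ j, ∃ a ≠ 0, ∃ W, RelatedUpTo F a W (Z j) := fun j =>
    exists_relatedUpTo_of_lieGen (by rintro _ ⟨i, rfl⟩; exact ⟨c i, hc i, X i, hid i⟩) (hZ j)
  choose a ha W hW using hlift
  have hdet := det_jac_mul_ne_zero hF0 hW ha (by simpa only [hZv] using hv)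
  obtain ⟨col, hcol⟩ := Matrix.exists_det_submatrix_ne_zero_of_det_mul_ne_zero hdet
  exact matGenRank_eq_of_det_submatrix_ne_zero col hcol

end Segre
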